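/- arXiv:2206.15374 — 3 statements merged into one kernel-verified Lean document; each statement's English description precedes it below -/
import Mathlib

section
/- In a directed acyclic graph, every vertex has at most one incoming covered edge, where an edge u → v is covered if the parents of u equal the parents of v minus u (i.e., Pa(u) \ {v} = Pa(v) \ {u}). -/
/-- An arc `u → v` of the digraph `E` is a *covered edge* if
`Pa(u) \ {v} = Pa(v) \ {u}`, where `Pa(x) = {w | E w x}`. -/
def Covered {V : Type*} (E : V → V → Prop) (u v : V) : Prop :=
  E u v ∧ ({x | E x u} \ {v} : Set V) = ({x | E x v} \ {u} : Set V)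

/-- In a DAG, every vertex has at most one incoming covered edge. -/
theorem stmt_0 {V : Type*} (E : V → V → Prop)
    (hacyc : ∀ v, ¬ Relation.TransGen E v v) :
    ∀ w u v : V, u ≠ v → Covered E u w → Covered E v w → False := by
  intro w u v huv hu hv
  have hvu : E v u := by
    have : v ∈ ({x | E x u} \ {w} : Set V) := hu.2 ▸ ⟨hv.1, fun h => huv (h.symm)⟩
    exact this.1
  have huvE : E u v := by
    have : u ∈ ({x | E x v} \ {w} : Set V) := hv.2 ▸ ⟨hu.1, fun h => huv h⟩
    exact this.1
  exact hacyc u (Relation.TransGen.head huvE (Relation.TransGen.single hvu))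
end

section
/- The subgraph of a DAG induced by its covered edges is a forest of directed trees (i.e., it is acyclic and every vertex has in-degree at most one in this subgraph). -/
namespace Covered

variable {V : Type*} {E : V → V → Prop} {u w x : V}

theorem rel_of_rel_of_ne (h : Covered E u w) (hx : E x w) (hxu : x ≠ u) : E x u := by
  have hmem : x ∈ ({y | E y w} \ {u} : Set V) := ⟨hx, hxu⟩
  rw [← h.2] at hmem
  exact hmem.1

end Covered

/-- The subgraph of a DAG induced by its covered edges is a forest of directed
trees: it is acyclic and every vertex has in-degree at most one in it. -/
theorem stmt_1 {V : Type*} (E : V → V → Prop)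
    (hacyc : ∀ v, ¬ Relation.TransGen E v v) :
    (∀ v, ¬ Relation.TransGen (Covered E) v v) ∧
      (∀ w u v : V, Covered E u w → Covered E v w → u = v) := by
  refine ⟨fun v hv => hacyc v (Relation.TransGen.mono (fun _ _ h => h.1) v v hv),
    fun w u v huw hvw => ?_⟩
  by_contra hne
  -- two covered parents of `w` are each a parent of the other: a 2-cycle
  have hvu : E v u := huw.rel_of_rel_of_ne hvw.1 (Ne.symm hne)
  have huv : E u v := hvw.rel_of_rel_of_ne huw.1 hne
  exact hacyc u (.tail (.single huv) hvu)
end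

section
/- In a DAG whose skeleton has r maximal cliques, the set of vertices that are not sinks of maximal cliques forms a vertex cover of the covered edges; consequently, the covered edges admit a vertex cover of size at most n − r, where n is the number of vertices. -/
/-- A set of vertices is a clique if it is pairwise adjacent (in either direction). -/
def IsDClique {V : Type*} (E : V → V → Prop) (K : Set V) : Prop :=
  ∀ a ∈ K, ∀ b ∈ K, a ≠ b → E a b ∨ E b a

/-- A clique is maximal if no strictly larger set is a clique. -/
def IsMaxDClique {V : Type*} (E : V → V → Prop) (K : Set V) : Prop :=
  IsDClique E K ∧ ∀ K', IsDClique E K' → K ⊆ K' → K' = K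

/-- `u` is a sink of some maximal clique of `E`. -/
def IsMaxCliqueSink {V : Type*} (E : V → V → Prop) (u : V) : Prop :=
  ∃ K : Set V, IsMaxDClique E K ∧ u ∈ K ∧ ∀ w ∈ K, w ≠ u → E w u

/-- In a DAG whose maximal-clique sinks form a set of size `r`, the complement
of the sinks is a vertex cover of the covered edges (every covered edge has
its tail outside the sinks), and this cover has size at most `n - r`. -/
theorem stmt_4 {V : Type*} [Fintype V] [DecidableEq V] (E : V → V → Prop)
    (hacyc : ∀ v, ¬ Relation.TransGen E v v)
    (S : Finset V) (hS : ∀ u : V, u ∈ S ↔ IsMaxCliqueSink E u)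
    (r : ℕ) (hr : S.card = r) :
    (∀ u v : V, Covered E u v → u ∈ Sᶜ) ∧ (Sᶜ : Finset V).card ≤ Fintype.card V - r := by
  constructor
  · intro u v hcov
    rw [Finset.mem_compl, hS]
    rintro ⟨K, ⟨hKcl, hKmax⟩, huK, hsink⟩
    obtain ⟨hEuv, hset⟩ := hcov
    have hne : u ≠ v := by
      rintro rfl; exact hacyc u (Relation.TransGen.single hEuv)
    have hvK : v ∉ K := by
      intro hvK
      have := hsink v hvK (Ne.symm hne)
      exact hacyc u (Relation.TransGen.head hEuv (Relation.TransGen.single this))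
    -- every w ∈ K, w ≠ u has E w v
    have hwv : ∀ w ∈ K, w ≠ u → E w v := by
      intro w hwK hwu
      have hwu' : E w u := hsink w hwK hwu
      have hwne : w ≠ v := fun h => hvK (h ▸ hwK)
      have : w ∈ ({x | E x u} \ {v} : Set V) := ⟨hwu', hwne⟩
      rw [hset] at this
      exact this.1
    -- K ∪ {v} is a clique
    have hcl : IsDClique E (K ∪ {v}) := by
      rintro a (haK | ha) b (hbK | hb) hab
      · exact hKcl a haK b hbK hab
      · rcases Set.mem_singleton_iff.mp hb with rfl
        by_cases hau : a = u
        · exact Or.inl (hau ▸ hEuv)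
        · exact Or.inl (hwv a haK hau)
      · rcases Set.mem_singleton_iff.mp ha with rfl
        by_cases hbu : b = u
        · exact Or.inr (hbu ▸ hEuv)
        · exact Or.inr (hwv b hbK hbu)
      · rcases Set.mem_singleton_iff.mp ha with rfl
        rcases Set.mem_singleton_iff.mp hb with rfl
        exact absurd rfl hab
    have := hKmax (K ∪ {v}) hcl Set.subset_union_left
    exact hvK (this ▸ (Set.mem_union_right K rfl : v ∈ K ∪ {v}))
  · rw [Finset.card_compl, hr]
end
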